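/- arXiv:0905.2420 — 3 statements merged into one kernel-verified Lean document; each statement's English description precedes it below -/
import Mathlib

section
/- Let p < q be odd primes. Then the cycle C_p is not a homogeneous minor of the cycle C_q: there is no connected graph H' such that (C_p, H') ≼₁ C_q with all p partition sets inducing subgraphs isomorphic to H'. -/
/-!
A branch set `V a` induces a connected proper subgraph of `C_q`, so it is an arc, and an arc has
only two outside neighbours. As `p ≥ 3`, the neighbours `a + 1` and `a - 1` of `a` in `C_p` are
distinct, so their disjoint branch sets both touch `V a` and must take up those two neighbours.
Hence the union of the branch sets is closed under adjacency and covers `C_q`. The branch sets all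
have `|H'|` vertices, so `p ∣ q`, impossible for primes `p < q`.
-/

/-- `(H, H')` is a homogeneous minor of `G`, written `(H,H') ≼₁ G`: `H'` is connected and
there are pairwise disjoint vertex sets `{V_h}` in `G`, each inducing a subgraph of `G`
isomorphic to `H'`, with an edge of `G` between `V_h` and `V_h'` whenever `h h' ∈ E(H)`. -/
def HomMinor {α β γ : Type*} (H : SimpleGraph α) (H' : SimpleGraph β) (G : SimpleGraph γ) :
    Prop :=
  H'.Connected ∧ ∃ V : α → Set γ,
    (∀ a b, a ≠ b → Disjoint (V a) (V b)) ∧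
    (∀ a, Nonempty (G.induce (V a) ≃g H')) ∧
    (∀ a b, H.Adj a b → ∃ x ∈ V a, ∃ y ∈ V b, G.Adj x y)

open SimpleGraph Set
open Fin.NatCast Fin.CommRing
open scoped Function

namespace SimpleGraph

variable {V : Type*}

def vertexBoundary (G : SimpleGraph V) (S : Set V) : Set V := {z | z ∉ S ∧ ∃ s ∈ S, G.Adj s z}

variable {G : SimpleGraph V}

lemma Reachable.mem_of_forall_adj_mem {T : Set V} (hT : ∀ x y, G.Adj x y → x ∈ T → y ∈ T)
    {x y : V} (hxy : G.Reachable x y) (hx : x ∈ T) : y ∈ T := by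
  rw [reachable_iff_reflTransGen] at hxy
  induction hxy with
  | refl => exact hx
  | tail _ hadj ih => exact hT _ _ hadj ih

lemma Preconnected.eq_univ_of_forall_adj_mem (hG : G.Preconnected) {T : Set V}
    (hT : ∀ x y, G.Adj x y → x ∈ T → y ∈ T) (hne : T.Nonempty) : T = univ := by
  obtain ⟨x, hx⟩ := hne
  exact eq_univ_of_forall fun y ↦ (hG x y).mem_of_forall_adj_mem hT hx

end SimpleGraph

lemma Set.subset_union_of_subset_pair {α : Type*} {B P Q : Set α} {u v : α} (hB : B ⊆ {u, v})
    (hP : (P ∩ B).Nonempty) (hQ : (Q ∩ B).Nonempty) (hPQ : Disjoint P Q) : B ⊆ P ∪ Q := by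
  obtain ⟨y, hyP, hyB⟩ := hP
  obtain ⟨z, hzQ, hzB⟩ := hQ
  intro w hw
  have := hPQ.ne_of_mem hyP hzQ
  have := hB hw; have := hB hyB; have := hB hzB
  grind

lemma Nat.card_eq_mul_of_partition {ι γ : Type*} [Finite ι] [Finite γ] {V : ι → Set γ}
    (hdisj : Pairwise (Disjoint on V)) (hcover : ⋃ i, V i = univ) {k : ℕ}
    (hcard : ∀ i, (V i).ncard = k) : Nat.card γ = Nat.card ι * k := by
  have := Fintype.ofFinite ι
  rw [← ncard_univ, ← hcover, ncard_iUnion_of_finite (fun _ ↦ toFinite _) hdisj,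
    finsum_eq_sum_of_fintype]
  simp [hcard]

namespace Fin

variable {n : ℕ} [NeZero n]

lemma eq_univ_of_forall_add_natCast_mem {S : Set (Fin n)} {x : Fin n}
    (h : ∀ k : ℕ, x + k ∈ S) : S = univ :=
  eq_univ_of_forall fun z ↦ by simpa using h (z - x).val

lemma eq_univ_of_forall_sub_natCast_mem {S : Set (Fin n)} {x : Fin n}
    (h : ∀ k : ℕ, x - k ∈ S) : S = univ :=
  eq_univ_of_forall fun z ↦ by simpa using h (x - z).val

def arc (x : Fin n) (m : ℕ) : Set (Fin n) := {y | ∃ i < m, y = x + i}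

end Fin

namespace SimpleGraph

variable {n : ℕ}

lemma vertexBoundary_arc_subset (x : Fin (n + 2)) (m : ℕ) :
    (cycleGraph (n + 2)).vertexBoundary (Fin.arc x m) ⊆ {x - 1, x + m} := by
  rintro z ⟨hz, _, ⟨i, hi, rfl⟩, hadj⟩
  simp only [mem_insert_iff, mem_singleton_iff]
  rcases cycleGraph_adj.1 hadj with h | h
  · rcases i with _ | i
    · left; push_cast at h; linear_combination -h
    · exact (hz ⟨i, by omega, by push_cast at h; linear_combination -h⟩).elim
  · by_cases hlt : i + 1 < m
    · exact (hz ⟨i + 1, hlt, by push_cast; linear_combination h⟩).elim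
    · obtain rfl : m = i + 1 := by omega
      right; push_cast; linear_combination h

lemma exists_eq_arc_of_connected {S : Set (Fin (n + 2))}
    (hS : ((cycleGraph (n + 2)).induce S).Connected) (hSu : S ≠ univ) :
    ∃ x m, S = Fin.arc x m := by
  classical
  obtain ⟨s, hs⟩ := nonempty_coe_sort.1 hS.nonempty
  obtain ⟨x, hx, hx1⟩ : ∃ x ∈ S, x - 1 ∉ S := by
    by_contra! h
    refine hSu (Fin.eq_univ_of_forall_sub_natCast_mem (x := s) fun k ↦ ?_)
    induction k with
    | zero => simpa
    | succ k ih => simpa [sub_sub] using h _ ih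
  have hex : ∃ k : ℕ, x + k ∉ S := by
    by_contra! h
    exact hSu (Fin.eq_univ_of_forall_add_natCast_mem h)
  refine ⟨x, Nat.find hex, subset_antisymm (fun y hy ↦ ?_) ?_⟩
  -- The arc's two exits `x - 1` and `x + m` lie outside `S`, so `S` cannot leave the arc.
  · have hclosed := hS.preconnected.eq_univ_of_forall_adj_mem
      (T := {y : S | y.1 ∈ Fin.arc x (Nat.find hex)}) ?_
      ⟨⟨x, hx⟩, 0, (Nat.find_pos hex).2 (by simpa), by simp⟩
    · exact eq_univ_iff_forall.1 hclosed ⟨y, hy⟩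
    rintro ⟨y, hy⟩ ⟨z, hz⟩ hadj hyA
    by_contra hzA
    rcases vertexBoundary_arc_subset x _ ⟨hzA, y, hyA, hadj⟩ with rfl | rfl
    · exact hx1 hz
    · exact Nat.find_spec hex hz
  · rintro _ ⟨i, hi, rfl⟩
    exact not_not.1 (Nat.find_min hex hi)

end SimpleGraph

lemma iUnion_eq_univ_of_cycleGraph_branchSets {m n : ℕ} {V : Fin (m + 3) → Set (Fin (n + 2))}
    (hdisj : Pairwise (Disjoint on V))
    (hconn : ∀ a, ((cycleGraph (n + 2)).induce (V a)).Connected)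
    (hadj : ∀ a b, (cycleGraph (m + 3)).Adj a b →
      ∃ x ∈ V a, ∃ y ∈ V b, (cycleGraph (n + 2)).Adj x y) :
    ⋃ a, V a = univ := by
  have hne (a : Fin (m + 3)) : (V a).Nonempty := nonempty_coe_sort.1 (hconn a).nonempty
  have hsucc (a : Fin (m + 3)) : a + 1 ≠ a := by simp
  have hsucc_pred (a : Fin (m + 3)) : a + 1 ≠ a - 1 := fun h ↦ by
    have h2 : (2 : Fin (m + 3)) = 0 := by linear_combination h
    simp [Fin.ext_iff, Nat.mod_eq_of_lt] at h2
  have hmeets (a b : Fin (m + 3)) (hab : (cycleGraph (m + 3)).Adj a b) :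
      (V b ∩ (cycleGraph (n + 2)).vertexBoundary (V a)).Nonempty := by
    obtain ⟨x, hx, y, hy, hxy⟩ := hadj a b hab
    exact ⟨y, hy, (hdisj hab.ne).notMem_of_mem_right hy, x, hx, hxy⟩
  have hboundary (a : Fin (m + 3)) :
      (cycleGraph (n + 2)).vertexBoundary (V a) ⊆ V (a + 1) ∪ V (a - 1) := by
    have hproper : V a ≠ univ := fun h ↦
      (hdisj (hsucc a)).ne_of_mem (hne _).some_mem (h ▸ mem_univ _) rfl
    obtain ⟨x, k, hx⟩ := exists_eq_arc_of_connected (hconn a) hproper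
    exact subset_union_of_subset_pair (hx ▸ vertexBoundary_arc_subset x k)
      (hmeets a _ (cycleGraph_adj.2 (.inr (by ring))))
      (hmeets a _ (cycleGraph_adj.2 (.inl (by ring)))) (hdisj (hsucc_pred a))
  refine cycleGraph_connected.preconnected.eq_univ_of_forall_adj_mem (fun y z hyz hy ↦ ?_)
    ⟨_, mem_iUnion_of_mem 0 (hne 0).some_mem⟩
  obtain ⟨a, hya⟩ := mem_iUnion.1 hy
  by_cases hza : z ∈ V a
  · exact mem_iUnion_of_mem a hza
  · rcases hboundary a ⟨hza, y, hya, hyz⟩ with h | h <;> exact mem_iUnion_of_mem _ h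

theorem HomMinor.dvd_of_cycleGraph {p n : ℕ} (hp : 3 ≤ p) {β : Type*} {H' : SimpleGraph β}
    (h : HomMinor (cycleGraph p) H' (cycleGraph (n + 2))) : p ∣ n + 2 := by
  obtain ⟨m, rfl⟩ : ∃ m, p = m + 3 := ⟨p - 3, by omega⟩
  obtain ⟨hH', V, hdisj, hiso, hadj⟩ := h
  have hcover := iUnion_eq_univ_of_cycleGraph_branchSets hdisj
    (fun a ↦ (hiso a).some.connected_iff.2 hH') hadj
  have hcard (a : Fin (m + 3)) : (V a).ncard = Nat.card β := by
    rw [← Nat.card_coe_set_eq]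
    exact Nat.card_congr (hiso a).some.toEquiv
  have hpartition := Nat.card_eq_mul_of_partition hdisj hcover hcard
  simp only [Nat.card_eq_fintype_card, Fintype.card_fin] at hpartition
  exact ⟨_, hpartition⟩

theorem stmt_9_general (p q : ℕ) (hp : p.Prime) (hq : q.Prime) (hop : Odd p)
    (hpq : p < q) :
    ∀ {β : Type} (H' : SimpleGraph β),
      ¬ HomMinor (SimpleGraph.cycleGraph p) H' (SimpleGraph.cycleGraph q) := by
  intro β H' h
  have hp3 : 3 ≤ p := by
    obtain ⟨r, rfl⟩ := hop
    have := hp.two_le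
    omega
  obtain ⟨n, rfl⟩ : ∃ n, q = n + 2 := ⟨q - 2, by have := hq.two_le; omega⟩
  rcases hq.eq_one_or_self_of_dvd p (h.dvd_of_cycleGraph hp3) with h1 | h1 <;> omega

theorem stmt_9 (p q : ℕ) (hp : p.Prime) (hq : q.Prime) (hop : Odd p) (hoq : Odd q)
    (hpq : p < q) :
    ∀ {β : Type} (H' : SimpleGraph β),
      ¬ HomMinor (SimpleGraph.cycleGraph p) H' (SimpleGraph.cycleGraph q) :=
  stmt_9_general p q hp hq hop hpq
end

section
/- The homogeneous minor relation does not well-quasi-order the finite graphs: the infinite sequence C_3, C_5, C_7, C_11, … of cycles of odd prime lengths is an antichain, i.e., for all i < j there is no connected graph H' with (C_{p_i}, H') ≼₁ C_{p_j}. -/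
open Finset Function

namespace SimpleGraph
variable {V : Type*} (G : SimpleGraph V)

def adjPairs [DecidableRel G.Adj] (s : Finset V) : Finset (V × V) :=
  {q ∈ s ×ˢ s | G.Adj q.1 q.2}

variable {G}

theorem card_adjPairs [DecidableRel G.Adj] (s : Finset V) :
    #(G.adjPairs s) = ∑ v ∈ s, #{w ∈ s | G.Adj v w} := by
  rw [adjPairs, card_filter, sum_product]
  simp only [card_filter]

theorem Walk.mem_of_adj_closed {s : Set V} (hs : ∀ v ∈ s, ∀ w, G.Adj v w → w ∈ s) :
    ∀ {u v : V}, G.Walk u v → u ∈ s → v ∈ s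
  | _, _, .nil, hu => hu
  | _, _, .cons h p, hu => p.mem_of_adj_closed hs (hs _ hu _ h)

theorem Connected.eq_univ_of_mul_card_le_card_adjPairs [Fintype V] [DecidableRel G.Adj]
    {d : ℕ} {s : Finset V} (hG : G.Connected) (hreg : G.IsRegularOfDegree d)
    (hs : s.Nonempty) (h : d * #s ≤ #(G.adjPairs s)) : s = univ := by
  have hsub : ∀ v, {w ∈ s | G.Adj v w} ⊆ G.neighborFinset v := fun v w hw => by
    simpa using (mem_filter.1 hw).2
  have hle : ∀ v ∈ s, #{w ∈ s | G.Adj v w} ≤ d := fun v _ =>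
    (card_le_card (hsub v)).trans (hreg v).le
  have heq : ∀ v ∈ s, #{w ∈ s | G.Adj v w} = d := by
    refine (sum_eq_sum_iff_of_le hle).1 (le_antisymm (sum_le_sum hle) ?_)
    rwa [sum_const, smul_eq_mul, mul_comm, ← card_adjPairs]
  have hclosed : ∀ v ∈ (s : Set V), ∀ w, G.Adj v w → w ∈ (s : Set V) := by
    intro v hv w hvw
    have hfull := eq_of_subset_of_card_le (hsub v)
      (by rw [heq v hv, card_neighborFinset_eq_degree, hreg v])
    have : w ∈ G.neighborFinset v := by simpa using hvw
    rw [← hfull] at this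
    exact (mem_filter.1 this).1
  obtain ⟨v, hv⟩ := hs
  exact eq_univ_of_forall fun w => (hG v w).some.mem_of_adj_closed hclosed hv

theorem two_mul_card_sub_one_le_card_adjPairs [Fintype V] [DecidableRel G.Adj] {s : Finset V}
    (h : (G.induce (s : Set V)).Connected) : 2 * (#s - 1) ≤ #(G.adjPairs s) := by
  classical
  have hvert := h.card_vert_le_card_edgeSet_add_one
  have hdart := (G.induce (s : Set V)).dart_card_eq_twice_card_edges
  have hinj : Fintype.card (G.induce (s : Set V)).Dart ≤ #(G.adjPairs s) := by
    rw [← card_univ]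
    refine card_le_card_of_injOn (fun d => (d.fst.1, d.snd.1)) ?_ ?_
    · intro d _
      simpa [adjPairs] using d.adj
    · intro d _ d' _ hdd'
      simp only [Prod.mk.injEq] at hdd'
      exact Dart.ext _ _ (Prod.ext (Subtype.ext hdd'.1) (Subtype.ext hdd'.2))
  rw [Nat.card_coe_set_eq, Set.ncard_coe_finset, Nat.card_eq_fintype_card,
    ← edgeFinset_card] at hvert
  omega

theorem sum_card_adjPairs_add_card_dart_le {α : Type*} [Fintype α] [DecidableEq V]
    [DecidableRel G.Adj] {H : SimpleGraph α} [Fintype H.Dart] {P : α → Finset V}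
    (hP : Pairwise (Disjoint on P))
    (hH : ∀ a b, H.Adj a b → ∃ x ∈ P a, ∃ y ∈ P b, G.Adj x y) :
    ∑ a, #(G.adjPairs (P a)) + Fintype.card H.Dart ≤ #(G.adjPairs (univ.biUnion P)) := by
  have hindex : ∀ {a b v}, v ∈ P a → v ∈ P b → a = b := fun ha hb =>
    by_contra fun hab => Finset.disjoint_left.1 (hP hab) ha hb
  choose x hx y hy hxy using fun d : H.Dart => hH d.fst d.snd d.adj
  set I := univ.biUnion fun a => G.adjPairs (P a)
  set C := univ.image fun d => (x d, y d)
  have hI : #I = ∑ a, #(G.adjPairs (P a)) := by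
    refine card_biUnion fun a _ b _ hab => Finset.disjoint_left.2 fun q hqa hqb => hab ?_
    simp only [adjPairs, mem_filter, mem_product] at hqa hqb
    exact hindex hqa.1.1 hqb.1.1
  have hC : #C = Fintype.card H.Dart := by
    refine card_image_of_injective _ fun d d' hdd' => ?_
    simp only [Prod.mk.injEq] at hdd'
    exact Dart.ext _ _ (Prod.ext (hindex (hx d) (hdd'.1 ▸ hx d'))
      (hindex (hy d) (hdd'.2 ▸ hy d')))
  have hIC : Disjoint I C := by
    refine Finset.disjoint_left.2 fun q hqI hqC => ?_
    simp only [I, C, adjPairs, mem_biUnion, mem_image, mem_filter, mem_product, mem_univ,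
      true_and] at hqI hqC
    obtain ⟨a, ⟨⟨hqa, hqa'⟩, -⟩⟩ := hqI
    obtain ⟨d, rfl⟩ := hqC
    exact d.adj.ne ((hindex (hx d) hqa).trans (hindex hqa' (hy d)))
  have hsub : I ∪ C ⊆ G.adjPairs (univ.biUnion P) := by
    intro q hq
    simp only [I, C, adjPairs, mem_union, mem_biUnion, mem_image, mem_filter, mem_product,
      mem_univ, true_and] at hq ⊢
    rcases hq with ⟨a, ⟨hqa, hqa'⟩, hadj⟩ | ⟨d, rfl⟩
    · exact ⟨⟨⟨a, hqa⟩, ⟨a, hqa'⟩⟩, hadj⟩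
    · exact ⟨⟨⟨_, hx d⟩, ⟨_, hy d⟩⟩, hxy d⟩
  calc ∑ a, #(G.adjPairs (P a)) + Fintype.card H.Dart = #(I ∪ C) := by
        rw [card_union_of_disjoint hIC, hI, hC]
    _ ≤ _ := card_le_card hsub

end SimpleGraph

open SimpleGraph

theorem HomMinor.exists_le_card_adjPairs {α β γ : Type*} [Fintype α] [Fintype γ]
    [DecidableEq γ] {H : SimpleGraph α} [Fintype H.Dart] {H' : SimpleGraph β}
    {G : SimpleGraph γ} [DecidableRel G.Adj] (h : HomMinor H H' G) :
    ∃ S : Finset γ, #S = Fintype.card α * Nat.card β ∧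
      Fintype.card α * (2 * (Nat.card β - 1)) + Fintype.card H.Dart ≤ #(G.adjPairs S) := by
  classical
  obtain ⟨hH', V, hdisj, hiso, hadj⟩ := h
  have hcard : ∀ a, #(V a).toFinset = Nat.card β := fun a => by
    rw [Set.toFinset_card, ← Nat.card_eq_fintype_card, Nat.card_congr (hiso a).some.toEquiv]
  have hP : Pairwise (Disjoint on fun a => (V a).toFinset) := fun a b hab =>
    Set.disjoint_toFinset.2 (hdisj a b hab)
  refine ⟨univ.biUnion fun a => (V a).toFinset, ?_, ?_⟩
  · rw [card_biUnion fun a _ b _ hab => hP hab]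
    simp [hcard]
  · refine le_trans ?_ (sum_card_adjPairs_add_card_dart_le (H := H) hP fun a b hab => ?_)
    · gcongr
      calc Fintype.card α * (2 * (Nat.card β - 1))
          = ∑ a, 2 * (#(V a).toFinset - 1) := by simp [hcard]
        _ ≤ ∑ a, #(G.adjPairs (V a).toFinset) := by
          refine sum_le_sum fun a _ => two_mul_card_sub_one_le_card_adjPairs ?_
          rw [Set.coe_toFinset]
          exact (hiso a).some.connected_iff.2 hH'
    · simpa using hadj a b hab

theorem not_homMinor_cycleGraph {m n : ℕ} (hm : 3 ≤ m) (hmn : m < n) (hn : n.Prime) {β : Type*}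
    (H' : SimpleGraph β) : ¬ HomMinor (cycleGraph m) H' (cycleGraph n) := by
  obtain ⟨m, rfl⟩ : ∃ m', m = m' + 3 := ⟨m - 3, by omega⟩
  obtain ⟨n, rfl⟩ : ∃ n', n = n' + 3 := ⟨n - 3, by omega⟩
  intro h
  obtain ⟨S, hS, hpairs⟩ := h.exists_le_card_adjPairs
  have hdart : Fintype.card (cycleGraph (m + 3)).Dart = 2 * (m + 3) := by
    simp [dart_card_eq_sum_degrees, cycleGraph_degree_three_le, mul_comm]
  rw [Fintype.card_fin] at hS hpairs
  rw [hdart] at hpairs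
  have hS2 : 2 * #S ≤ #((cycleGraph (n + 3)).adjPairs S) := by
    refine le_trans ?_ hpairs
    rw [hS]
    rcases Nat.card β with _ | k
    · simp
    · rw [Nat.add_sub_cancel]
      exact le_of_eq (by ring)
  have hSne : S.Nonempty := by
    obtain ⟨q, hq⟩ := card_pos.1 (hpairs.trans_lt' (by omega))
    exact ⟨q.1, (mem_product.1 (mem_filter.1 hq).1).1⟩
  have hSuniv := cycleGraph_connected.eq_univ_of_mul_card_le_card_adjPairs
    (fun _ => cycleGraph_degree_three_le) hSne hS2
  rw [hSuniv, card_univ, Fintype.card_fin] at hS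
  rcases hn.eq_one_or_self_of_dvd _ (Dvd.intro _ hS.symm) with h1 | h1 <;> omega

/-- The cycles of odd prime lengths form an infinite antichain for the homogeneous minor
relation, so `≼₁` is not a well-quasi-order on finite graphs. -/
theorem stmt_11 (p : ℕ → ℕ) (hmono : StrictMono p)
    (hprime : ∀ i, (p i).Prime) (hodd : ∀ i, Odd (p i)) :
    ∀ i j : ℕ, i < j →
      ∀ {β : Type} (H' : SimpleGraph β),
        ¬ HomMinor (SimpleGraph.cycleGraph (p i)) H' (SimpleGraph.cycleGraph (p j)) := by
  intro i j hij β H'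
  have h3 : 3 ≤ p i := by
    obtain ⟨r, hr⟩ := hodd i
    have := (hprime i).two_le
    omega
  exact not_homMinor_cycleGraph h3 (hmono hij) (hprime j) H'
end

section
/- Let X be a finite connected vertex-transitive graph with valency d ≥ 2, and suppose V(X) is partitioned into sets {V_x} each of size at least 2, with each induced subgraph X[V_x] isomorphic to a fixed graph X''. Fix one part V and let u ∈ V be a vertex incident with an edge leaving V. Then there exists a vertex v ∈ V with v ≠ u such that v has degree strictly less than d in the induced subgraph X[V]. (Consequently at least two vertices of V have degree < d inside V.) -/
/-!
A vertex `p` at maximal distance from some root `r` is not a cut vertex: a shortest walk from `r`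
through `p` to another vertex would be longer than `dist r p`. By vertex-transitivity no vertex is
a cut vertex. So if `u` has a neighbour `w ∉ V` and `s ∈ V` is a vertex other than `u`, some walk
from `s` to `w` avoids `u`; where it first leaves `V` it passes through a vertex `v ∈ V`, `v ≠ u`,
with a neighbour outside `V`, and that vertex has degree `< d` in `X[V]`.
-/

namespace SimpleGraph

variable {α : Type*} {X : SimpleGraph α}

lemma Connected.exists_walk_from_notMem_support_of_forall_dist_le (hconn : X.Connected)
    {r p : α} (hp : ∀ y, X.dist r y ≤ X.dist r p) {y : α} (hy : y ≠ p) :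
    ∃ q : X.Walk r y, p ∉ q.support := by
  classical
  obtain ⟨q, hq⟩ := hconn.exists_walk_length_eq_dist r y
  refine ⟨q, fun hpq => ?_⟩
  have : X.dist r p < X.dist r y :=
    hq ▸ (X.dist_le _).trans_lt (q.length_takeUntil_lt_length hpq hy.symm)
  exact (hp y).not_gt this

lemma Connected.exists_walk_notMem_support_of_forall_dist_le (hconn : X.Connected)
    {r p : α} (hp : ∀ y, X.dist r y ≤ X.dist r p) {x y : α} (hx : x ≠ p) (hy : y ≠ p) :
    ∃ q : X.Walk x y, p ∉ q.support := by
  obtain ⟨qx, hqx⟩ := hconn.exists_walk_from_notMem_support_of_forall_dist_le hp hx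
  obtain ⟨qy, hqy⟩ := hconn.exists_walk_from_notMem_support_of_forall_dist_le hp hy
  refine ⟨qx.reverse.append qy, ?_⟩
  simp [Walk.mem_support_append_iff, hqx, hqy]

lemma Connected.exists_walk_notMem_support_of_forall_exists_iso [Finite α]
    (hconn : X.Connected) (hvt : ∀ x y : α, ∃ φ : X ≃g X, φ x = y) {u x y : α}
    (hx : x ≠ u) (hy : y ≠ u) : ∃ q : X.Walk x y, u ∉ q.support := by
  have : Nonempty α := ⟨u⟩
  obtain ⟨p, hp⟩ := Finite.exists_max (X.dist u)
  obtain ⟨φ, rfl⟩ := hvt p u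
  obtain ⟨q, hq⟩ := hconn.exists_walk_notMem_support_of_forall_dist_le hp
    (x := φ.symm x) (y := φ.symm y) (by simpa [φ.symm_apply_eq] using hx)
    (by simpa [φ.symm_apply_eq] using hy)
  refine ⟨(q.map φ.toHom).copy (φ.apply_symm_apply x) (φ.apply_symm_apply y), ?_⟩
  simpa [Walk.support_map] using hq

lemma ncard_setOf_mem_and_adj_lt_degree [Fintype α] [DecidableRel X.Adj] {S : Set α} {v w : α}
    (hw : w ∉ S) (hvw : X.Adj v w) : {x | x ∈ S ∧ X.Adj v x}.ncard < X.degree v := by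
  have hsub : {x | x ∈ S ∧ X.Adj v x} ⊂ X.neighborSet v :=
    ⟨fun x hx => hx.2, fun h => hw (h hvw).1⟩
  calc {x | x ∈ S ∧ X.Adj v x}.ncard < (X.neighborSet v).ncard :=
        Set.ncard_lt_ncard hsub (Set.toFinite _)
    _ = X.degree v := by
        rw [Set.ncard_eq_toFinset_card', Set.toFinset_card, card_neighborSet_eq_degree]

end SimpleGraph

theorem stmt_13_general {α : Type*} [Fintype α] (X : SimpleGraph α)
    [DecidableRel X.Adj] (d : ℕ)
    (hreg : ∀ v, X.degree v = d)
    (hconn : X.Connected)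
    (hvt : ∀ x y : α, ∃ φ : X ≃g X, φ x = y)
    (ι : Type*) (V : ι → Set α)
    (hsize : ∀ a, 2 ≤ (V a).ncard)
    (a : ι) (u : α)
    (hleave : ∃ w, w ∉ V a ∧ X.Adj u w) :
    ∃ v ∈ V a, v ≠ u ∧ {w | w ∈ V a ∧ X.Adj v w}.ncard < d := by
  obtain ⟨w, hw, huw⟩ := hleave
  obtain ⟨s, hs, hsu⟩ := Set.exists_ne_of_one_lt_ncard (hsize a) u
  obtain ⟨q, hq⟩ := hconn.exists_walk_notMem_support_of_forall_exists_iso hvt hsu huw.ne.symm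
  obtain ⟨e, he, heV, heV'⟩ := q.exists_boundary_dart (V a) hs hw
  refine ⟨e.fst, heV, fun h => hq (h ▸ q.dart_fst_mem_support_of_mem_darts he), ?_⟩
  exact hreg e.fst ▸ SimpleGraph.ncard_setOf_mem_and_adj_lt_degree heV' e.adj

/-- In a finite connected vertex-transitive graph `X` of valency `d ≥ 2` whose vertex set is
partitioned into parts of size `≥ 2` all inducing copies of a fixed graph `X''`, every part `V`
containing a vertex `u` incident with an edge leaving `V` also contains a second vertex `v ≠ u`
of degree `< d` in the induced subgraph `X[V]`. -/
theorem stmt_13 {α β : Type*} [Fintype α] [DecidableEq α] (X : SimpleGraph α)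
    [DecidableRel X.Adj] (d : ℕ) (hd : 2 ≤ d)
    (hreg : ∀ v, X.degree v = d)
    (hconn : X.Connected)
    (hvt : ∀ x y : α, ∃ φ : X ≃g X, φ x = y)
    (ι : Type*) (V : ι → Set α)
    (hdisj : ∀ a b, a ≠ b → Disjoint (V a) (V b))
    (hcover : (⋃ a, V a) = Set.univ)
    (hsize : ∀ a, 2 ≤ (V a).ncard)
    (X'' : SimpleGraph β)
    (hiso : ∀ a, Nonempty (X.induce (V a) ≃g X''))
    (a : ι) (u : α) (hu : u ∈ V a)
    (hleave : ∃ w, w ∉ V a ∧ X.Adj u w) :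
    ∃ v ∈ V a, v ≠ u ∧ {w | w ∈ V a ∧ X.Adj v w}.ncard < d :=
  stmt_13_general X d hreg hconn hvt ι V hsize a u hleave
end
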